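/- arXiv:2112.15467 — 2 statements merged into one kernel-verified Lean document; each statement's English description precedes it below -/
import Mathlib

section
/- Let P and Q be coprime prime powers (or equal to 1 or 2) and let G = C_P ⋊ C_Q be a semidirect product of cyclic groups where C_Q acts faithfully on C_P. Then every element of G has prime power order. -/
open SemidirectProduct

private lemma aux_dvd_pp {p k d : ℕ} (hp : p.Prime) (hd : d ∣ p ^ k) (h1 : d ≠ 1) :
    IsPrimePow d := by
  obtain ⟨i, hi, rfl⟩ := (Nat.dvd_prime_pow hp).mp hd
  refine ⟨p, i, hp.prime, ?_, rfl⟩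
  rcases Nat.eq_zero_or_pos i with h | h
  · simp [h] at h1
  · exact h

private lemma zmod_aux {p k : ℕ} (hp : p.Prime) (hk : 0 < k) (u : (ZMod (p ^ k))ˣ)
    (hu : u ≠ 1) (hcop : (orderOf u).Coprime (p ^ k)) :
    IsUnit ((u : ZMod (p ^ k)) - 1) := by
  haveI : NeZero (p ^ k) := ⟨pow_ne_zero _ hp.pos.ne'⟩
  haveI : NeZero p := ⟨hp.pos.ne'⟩
  have hdvd : p ∣ p ^ k := dvd_pow_self p hk.ne'
  by_cases hw : ZMod.unitsMap hdvd u = 1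
  · exfalso
    -- u lies in the kernel, whose cardinality is p^(k-1)
    have hmem : u ∈ (ZMod.unitsMap hdvd).ker := hw
    have hord : orderOf u ∣ Nat.card (ZMod.unitsMap hdvd).ker := by
      have := orderOf_dvd_natCard (⟨u, hmem⟩ : (ZMod.unitsMap hdvd).ker)
      rwa [Subgroup.orderOf_mk] at this
    have hcardker : Nat.card (ZMod.unitsMap hdvd).ker = p ^ (k - 1) := by
      have hsurj := ZMod.unitsMap_surjective (n := p) hdvd
      have h1 : Nat.card (ZMod (p ^ k))ˣ =
          Nat.card ((ZMod (p ^ k))ˣ ⧸ (ZMod.unitsMap hdvd).ker) *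
            Nat.card (ZMod.unitsMap hdvd).ker :=
        Subgroup.card_eq_card_quotient_mul_card_subgroup _
      have h2 : Nat.card ((ZMod (p ^ k))ˣ ⧸ (ZMod.unitsMap hdvd).ker) = Nat.card (ZMod p)ˣ :=
        Nat.card_congr (QuotientGroup.quotientKerEquivOfSurjective _ hsurj).toEquiv
      rw [h2, Nat.card_eq_fintype_card, Nat.card_eq_fintype_card,
        ZMod.card_units_eq_totient, ZMod.card_units_eq_totient,
        Nat.totient_prime_pow hp hk, Nat.totient_prime hp] at h1
      have hpos : 0 < p - 1 := by have := hp.one_lt; omega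
      refine Nat.eq_of_mul_eq_mul_left hpos ?_
      rw [← h1]; ring
    rw [hcardker] at hord
    have hcop' : (orderOf u).Coprime (p ^ (k - 1)) :=
      Nat.Coprime.coprime_dvd_right (pow_dvd_pow p (Nat.sub_le k 1)) hcop
    have : orderOf u = 1 := Nat.eq_one_of_dvd_coprimes hcop' dvd_rfl hord
    exact hu (orderOf_eq_one_iff.mp this)
  · -- the image of u - 1 mod p is nonzero, hence u - 1 is a unit
    set a : ZMod (p ^ k) := (u : ZMod (p ^ k)) - 1 with ha
    have hcast : (ZMod.castHom hdvd (ZMod p)) a ≠ 0 := by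
      intro h0
      apply hw
      have : (ZMod.castHom hdvd (ZMod p)) (u : ZMod (p ^ k)) = 1 := by
        have := h0
        rw [ha, map_sub, map_one, sub_eq_zero] at this
        exact this
      ext
      simpa [ZMod.unitsMap] using this
    have hnd : ¬ p ∣ a.val := by
      intro hdvd2
      apply hcast
      rw [ZMod.castHom_apply, ZMod.cast_eq_val]
      exact (ZMod.natCast_eq_zero_iff a.val p).mpr hdvd2
    have hco : (a.val).Coprime (p ^ k) :=
      Nat.Coprime.pow_right _ ((Nat.Prime.coprime_iff_not_dvd hp).mpr hnd).symm
    have := (ZMod.isUnit_iff_coprime a.val (p ^ k)).mpr hco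
    rwa [ZMod.natCast_val, ZMod.cast_id] at this


private lemma zmod_fixed {N p k : ℕ} (hp : p.Prime) (hk : 0 < k) (hN : N = p ^ k)
    (c y : ZMod N) (hc : c ≠ 1) (hcu : IsUnit c) {n : ℕ} (hn : c ^ n = 1)
    (hcop : n.Coprime N) (hy : y * c = y) : y = 0 := by
  subst hN
  haveI : NeZero (p ^ k) := ⟨pow_ne_zero _ hp.pos.ne'⟩
  obtain ⟨u, hu⟩ := hcu
  have hupow : u ^ n = 1 := by
    ext
    rw [Units.val_pow_eq_pow_val, hu, hn, Units.val_one]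
  have hord : orderOf u ∣ n := orderOf_dvd_of_pow_eq_one hupow
  have hu1 : u ≠ 1 := by
    rintro rfl
    exact hc (by simpa using hu.symm)
  have hunit := zmod_aux hp hk u hu1 (Nat.Coprime.coprime_dvd_left hord hcop)
  rw [hu] at hunit
  have hz : y * (c - 1) = 0 := by rw [mul_sub, hy, mul_one, sub_self]
  obtain ⟨w, hw⟩ := hunit
  have : y = y * (c - 1) * ↑w⁻¹ := by rw [mul_assoc, ← hw, Units.mul_inv, mul_one]
  rw [this, hz, zero_mul]

private lemma fixedpt {A : Type*} [Group A] [Fintype A] [IsCyclic A]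
    (hpp : IsPrimePow (Fintype.card A)) (σ : MulAut A) (hσ : σ ≠ 1)
    (hcop : (orderOf σ).Coprime (Fintype.card A)) {x : A} (hx : σ x = x) : x = 1 := by
  obtain ⟨p, k, hp0, hk, hcard⟩ := hpp
  have hp : p.Prime := hp0.nat_prime
  have hN : Nat.card A = p ^ k := by rw [Nat.card_eq_fintype_card, hcard]
  let e : Multiplicative (ZMod (Nat.card A)) ≃* A := zmodCyclicMulEquiv inferInstance
  set N := Nat.card A with hNdef
  haveI : NeZero N := ⟨by rw [hN]; exact pow_ne_zero _ hp.pos.ne'⟩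
  -- additive transfer of σ
  set f : ZMod N → ZMod N :=
    fun y => Multiplicative.toAdd (e.symm (σ (e (Multiplicative.ofAdd y)))) with hf
  have hfadd : ∀ a b : ZMod N, f (a + b) = f a + f b := by
    intro a b
    simp only [hf, ofAdd_add, map_mul, toAdd_mul]
  set c : ZMod N := f 1 with hc
  have hfmul : ∀ y : ZMod N, f y = y * c := by
    intro y
    have h1 : y = y.val • (1 : ZMod N) := by
      rw [nsmul_eq_mul, mul_one, ZMod.natCast_val, ZMod.cast_id]
    have h2 : f (y.val • (1 : ZMod N)) = y.val • f 1 := by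
      induction y.val with
      | zero =>
        simp only [zero_smul]
        have h0 := hfadd 0 0
        simp only [add_zero] at h0
        exact left_eq_add.mp h0
      | succ m ih =>
        rw [succ_nsmul, succ_nsmul, hfadd, ih]
    rw [← hc] at h2
    calc f y = f (y.val • (1 : ZMod N)) := by rw [← h1]
      _ = y.val • c := h2
      _ = y * c := by rw [nsmul_eq_mul, ZMod.natCast_val, ZMod.cast_id]
  have hsigma : ∀ y : ZMod N, σ (e (Multiplicative.ofAdd y)) = e (Multiplicative.ofAdd (y * c)) := by
    intro y
    have := hfmul y
    rw [hf] at this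
    simp only at this
    rw [← this]
    simp [hf]
  -- c ≠ 1
  have hc1 : c ≠ 1 := by
    intro h1
    apply hσ
    ext z
    have hz : z = e (Multiplicative.ofAdd (Multiplicative.toAdd (e.symm z))) := by simp
    rw [hz, hsigma, h1, mul_one]
    simp
  -- c ^ orderOf σ = 1
  have hiter : ∀ j : ℕ, (σ ^ j) (e (Multiplicative.ofAdd (1 : ZMod N)))
      = e (Multiplicative.ofAdd (c ^ j)) := by
    intro j
    induction j with
    | zero => simp
    | succ m ih =>
      rw [pow_succ', MulAut.mul_apply, ih, hsigma, ← pow_succ]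
  have hcn : c ^ orderOf σ = 1 := by
    have := hiter (orderOf σ)
    rw [pow_orderOf_eq_one σ] at this
    simp only [MulAut.one_apply] at this
    exact (Multiplicative.ofAdd.injective (e.injective this)).symm
  -- c is a unit
  have hcu : IsUnit c := by
    set y0 : ZMod N := Multiplicative.toAdd (e.symm (σ⁻¹ (e (Multiplicative.ofAdd (1 : ZMod N))))) with hy0
    have : σ (e (Multiplicative.ofAdd y0)) = e (Multiplicative.ofAdd (1 : ZMod N)) := by
      rw [hy0]; simp
    rw [hsigma] at this
    have h1 : y0 * c = 1 := by
      have := e.injective this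
      exact Multiplicative.ofAdd.injective this
    exact IsUnit.of_mul_eq_one y0 (by rw [mul_comm]; exact h1)
  -- coprimality
  have hcop' : (orderOf σ).Coprime N := by rwa [hNdef, Nat.card_eq_fintype_card]
  -- fixed point
  set y : ZMod N := Multiplicative.toAdd (e.symm x) with hy
  have hex : e (Multiplicative.ofAdd y) = x := by rw [hy]; simp
  have hyc : y * c = y := by
    have h1 := hsigma y
    rw [hex, hx] at h1
    rw [← hex] at h1
    exact (Multiplicative.ofAdd.injective (e.injective h1)).symm
  have hy0 : y = 0 := zmod_fixed hp hk hN c y hc1 hcu hcn hcop' hyc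
  rw [← hex, hy0]
  simp


/-- If `G = C_P ⋊ C_Q` with `P`, `Q` coprime, each equal to `1` or `2` or a prime power,
and `C_Q` acting faithfully on `C_P`, then every nontrivial element of `G` has
prime power order. -/
theorem stmt1 {A B : Type*} [Group A] [Group B] [Fintype A] [Fintype B]
    [IsCyclic A] [IsCyclic B]
    (hP : Fintype.card A = 1 ∨ IsPrimePow (Fintype.card A))
    (hQ : Fintype.card B = 1 ∨ IsPrimePow (Fintype.card B))
    (hco : Nat.Coprime (Fintype.card A) (Fintype.card B))
    (φ : B →* MulAut A) (hφ : Function.Injective φ) :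
    ∀ g : A ⋊[φ] B, g ≠ 1 → IsPrimePow (orderOf g) := by
  intro g hg
  have hcomm : ∀ x y : A, x * y = y * x := by
    obtain ⟨z, hz⟩ := IsCyclic.exists_generator (α := A)
    intro x y
    obtain ⟨i, rfl⟩ := hz x
    obtain ⟨j, rfl⟩ := hz y
    rw [← zpow_add, ← zpow_add, add_comm]
  rcases eq_or_ne g.right 1 with hb | hb
  · -- g lies in A
    have hgl : g = SemidirectProduct.inl g.left := by ext <;> simp [hb]
    have hord : orderOf g = orderOf g.left := by
      conv_lhs => rw [hgl]
      exact orderOf_injective _ SemidirectProduct.inl_injective _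
    have hne : g.left ≠ 1 := fun h => hg (by rw [hgl, h, map_one])
    rcases hP with h1 | hpp
    · exfalso
      obtain ⟨x, hx⟩ := Fintype.card_eq_one_iff.mp h1
      exact hne ((hx g.left).trans (hx 1).symm)
    · obtain ⟨p, k, hp0, hk, hcard⟩ := hpp
      rw [hord]
      refine aux_dvd_pp hp0.nat_prime (hcard ▸ orderOf_dvd_card) ?_
      exact fun h => hne (orderOf_eq_one_iff.mp h)
  · -- g has nontrivial B-part
    set m := orderOf g.right with hm
    have hkey : g ^ m = 1 := by
      have hr : (g ^ m).right = 1 := by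
        have h1 : SemidirectProduct.rightHom (g ^ m) = 1 := by
          rw [map_pow]
          exact pow_orderOf_eq_one g.right
        exact h1
      have hl : φ g.right (g ^ m).left = (g ^ m).left := by
        have hc' : g * g ^ m = g ^ m * g := (Commute.self_pow g m).eq
        have h2 := congrArg SemidirectProduct.left hc'
        rw [SemidirectProduct.mul_left, SemidirectProduct.mul_left, hr, map_one] at h2
        simp only [MulAut.one_apply] at h2
        rw [hcomm ((g ^ m).left) g.left] at h2
        exact mul_left_cancel h2
      have hleft1 : (g ^ m).left = 1 := by
        rcases hP with h1 | hpp
        · obtain ⟨x, hx⟩ := Fintype.card_eq_one_iff.mp h1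
          exact (hx ((g ^ m).left)).trans (hx 1).symm
        · refine fixedpt hpp (φ g.right) ?_ ?_ hl
          · intro h
            exact hb (hφ (by rw [h, map_one]))
          · have horder : orderOf (φ g.right) = m := orderOf_injective φ hφ g.right
            rw [horder]
            exact Nat.Coprime.coprime_dvd_left orderOf_dvd_card hco.symm
      have : g ^ m = SemidirectProduct.inl ((g ^ m).left) := by ext <;> simp [hr]
      rw [this, hleft1, map_one]
    have hdvd : orderOf g ∣ m := orderOf_dvd_of_pow_eq_one hkey
    have hmB : m ∣ Fintype.card B := orderOf_dvd_card
    have hone : orderOf g ≠ 1 := fun h => hg (orderOf_eq_one_iff.mp h)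
    rcases hQ with h1 | hpp
    · exact absurd (orderOf_eq_one_iff.mp (Nat.dvd_one.mp (h1 ▸ hmB))) hb
    · obtain ⟨p, k, hp0, hk, hcard⟩ := hpp
      exact aux_dvd_pp hp0.nat_prime (hcard ▸ hdvd.trans hmB) hone
end

section
/- Let F be a formally real field (i.e., −1 is not a sum of squares in F). If an element a of the Laurent series field F((s)) with a ∈ F is a sum of two squares in F((s)), then a is a sum of two squares in F. -/
open HahnSeries

private lemma sq_add_sq_ne_zero {F : Type*} [Field F] (hF : ¬ IsSumSq (-1 : F))
    {c d : F} (hc : c ≠ 0) : c ^ 2 + d ^ 2 ≠ 0 := by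
  intro h
  apply hF
  have : (-1 : F) = (d / c) * (d / c) + 0 := by
    field_simp
    linear_combination -h
  rw [this]
  exact IsSumSq.sq_add _ IsSumSq.zero

private lemma lead_coeff_eq {F : Type*} [Field F] {x : LaurentSeries F} (hx : x ≠ 0) :
    x.leadingCoeff = x.coeff x.order := by
  rw [leadingCoeff_of_ne_zero hx, order_of_ne hx]
  simp [orderTop_of_ne_zero hx]

private lemma key_coeff {F : Type*} [Field F] (x y : LaurentSeries F) (hx : x ≠ 0)
    (hle : y ≠ 0 → x.order ≤ y.order) :
    (x ^ 2 + y ^ 2).coeff (x.order + x.order)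
      = (x.coeff x.order) ^ 2 + (y.coeff x.order) ^ 2 := by
  have hx2 : (x ^ 2).coeff (x.order + x.order) = (x.coeff x.order) ^ 2 := by
    rw [sq, coeff_mul_order_add_order x x, ← lead_coeff_eq hx, sq]
  have hy2 : (y ^ 2).coeff (x.order + x.order) = (y.coeff x.order) ^ 2 := by
    rcases eq_or_ne y 0 with rfl | hy
    · simp
    rcases lt_or_eq_of_le (hle hy) with hlt | heq
    · have h1 : y.coeff x.order = 0 := coeff_eq_zero_of_lt_order hlt
      have h2 : (y ^ 2).coeff (x.order + x.order) = 0 := by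
        apply coeff_eq_zero_of_lt_order
        rw [sq, order_mul hy hy]
        exact add_lt_add hlt hlt
      rw [h1, h2]; ring
    · rw [heq, sq, coeff_mul_order_add_order y y, ← lead_coeff_eq hy]
      exact (sq _).symm
  simp [hx2, hy2]

/-- Let `F` be a formally real field (`-1` is not a sum of squares in `F`). If an
element `a ∈ F` is a sum of two squares in the Laurent series field `F((s))`, then
`a` is already a sum of two squares in `F`. -/
theorem stmt7 {F : Type*} [Field F] (hF : ¬ IsSumSq (-1 : F)) (a : F)
    (h : ∃ x y : LaurentSeries F,
      (algebraMap F (LaurentSeries F)) a = x ^ 2 + y ^ 2) :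
    ∃ x y : F, a = x ^ 2 + y ^ 2 := by
  obtain ⟨x, y, hxy⟩ := h
  rcases eq_or_ne a 0 with rfl | ha
  · exact ⟨0, 0, by ring⟩
  -- main auxiliary claim
  have aux : ∀ x y : LaurentSeries F, x ≠ 0 → (y ≠ 0 → x.order ≤ y.order) →
      (algebraMap F (LaurentSeries F)) a = x ^ 2 + y ^ 2 → ∃ c d : F, a = c ^ 2 + d ^ 2 := by
    intro x y hx hle heq
    have hC : (algebraMap F (LaurentSeries F)) a = single 0 a := by
      rw [HahnSeries.algebraMap_apply', PowerSeries.algebraMap_apply]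
      simp [HahnSeries.ofPowerSeries_C, HahnSeries.C_apply]
    rw [hC] at heq
    have hco := key_coeff x y hx hle
    have hne : (x ^ 2 + y ^ 2).coeff (x.order + x.order) ≠ 0 := by
      rw [hco]
      exact sq_add_sq_ne_zero hF (by rw [← lead_coeff_eq hx]; exact leadingCoeff_ne_zero.mpr hx)
    have hord : x.order + x.order = 0 := by
      by_contra hne0
      apply hne
      rw [← heq, HahnSeries.coeff_single, if_neg hne0]
    have hx0 : x.order = 0 := by omega
    refine ⟨x.coeff x.order, y.coeff x.order, ?_⟩
    rw [← hco, ← heq, hord, HahnSeries.coeff_single_same]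
  rcases eq_or_ne x 0 with rfl | hx
  · rcases eq_or_ne y 0 with rfl | hy
    · exfalso
      apply ha
      have : (algebraMap F (LaurentSeries F)) a = 0 := by rw [hxy]; ring
      exact (map_eq_zero _).mp this
    · exact aux y 0 hy (by intro h0; exact absurd rfl h0) (by rw [hxy]; ring)
  rcases eq_or_ne y 0 with rfl | hy
  · exact aux x 0 hx (by intro h0; exact absurd rfl h0) hxy
  rcases le_total x.order y.order with hle | hle
  · exact aux x y hx (fun _ => hle) hxy
  · exact aux y x hy (fun _ => hle) (by rw [hxy]; ring)
end
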